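/- arXiv:2404.10117 — 2 statements merged into one kernel-verified Lean document; each statement's English description precedes it below -/
import Mathlib

section
/- Let k ≥ 2 be an integer and let t > 0 be a real number. Then the complex number (e^{iπ/k} + 2t e^{iπ/(2k)} + t²)^k has strictly positive imaginary part; consequently 1 + (e^{iπ/k} + 2t e^{iπ/(2k)} + t²)^k does not lie on the nonpositive real axis (−∞, 0]. -/
/-! With `θ = π / (2k)` the base is the perfect square `(e^{iθ} + t)²`. Adding `t > 0` to the
point `e^{iθ}` of the upper half-plane moves its argument strictly into `(0, θ)`, so the
`2k`-th power has argument in `(0, π)` and hence positive imaginary part. -/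

open Complex Real

namespace Complex

theorem arg_pos_of_im_pos {z : ℂ} (hz : 0 < z.im) : 0 < arg z :=
  (arg_nonneg_iff.2 hz.le).lt_of_ne' fun h => hz.ne' (arg_eq_zero_iff.1 h).2

theorem arg_add_ofReal_lt {z : ℂ} (hz : 0 < z.im) {t : ℝ} (ht : 0 < t) :
    arg (z + t) < arg z := by
  have hz0 : z ≠ 0 := fun h => by simp [h] at hz
  have hquot : (1 + (t : ℂ) / z).im < 0 := by
    simp only [add_im, one_im, div_im, ofReal_re, ofReal_im, zero_mul, zero_div, zero_add,
      zero_sub]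
    exact neg_neg_of_pos (div_pos (mul_pos ht hz) (normSq_pos.2 hz0))
  have hquot0 : 1 + (t : ℂ) / z ≠ 0 := fun h => by simp [h] at hquot
  have hsplit : z + t = z * (1 + t / z) := by field_simp
  have hz_nonneg := arg_nonneg_iff.2 hz.le
  have hquot_neg := arg_neg_iff.2 hquot
  rw [hsplit, arg_mul hz0 hquot0 ⟨by linarith [neg_pi_lt_arg (1 + (t : ℂ) / z)], by
    linarith [arg_le_pi z]⟩]
  linarith

theorem arg_exp_mul_I_add_ofReal_mem_Ioo {θ : ℝ} (hθ₀ : 0 < θ) (hθπ : θ < π) {t : ℝ}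
    (ht : 0 < t) : arg (exp (θ * I) + t) ∈ Set.Ioo 0 θ := by
  have him : 0 < (exp (θ * I)).im := by
    rw [exp_ofReal_mul_I_im]
    exact sin_pos_of_pos_of_lt_pi hθ₀ hθπ
  have harg : arg (exp (θ * I)) = θ := by
    rw [arg_exp_mul_I, toIocMod_eq_self]
    constructor <;> linarith
  exact ⟨arg_pos_of_im_pos (by simpa using him), (arg_add_ofReal_lt him ht).trans_eq harg⟩

theorem im_pow_pos_of_arg {w : ℂ} {n : ℕ} (h₀ : 0 < n * arg w) (hπ : n * arg w < π) :
    0 < (w ^ n).im := by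
  have hw : w ≠ 0 := fun h => by simp [h] at h₀
  rw [← norm_mul_exp_arg_mul_I w, mul_pow, ← exp_nat_mul, ← ofReal_pow, ← mul_assoc,
    ← ofReal_natCast, ← ofReal_mul, im_ofReal_mul, exp_ofReal_mul_I_im]
  exact mul_pos (pow_pos (norm_pos_iff.2 hw) n) (sin_pos_of_pos_of_lt_pi h₀ hπ)

theorem one_add_mem_slitPlane_of_im_pos {z : ℂ} (hz : 0 < z.im) : 1 + z ∈ slitPlane :=
  mem_slitPlane_iff.2 (Or.inr (by simpa using hz.ne'))

theorem exp_two_mul_add_sq (θ t : ℂ) :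
    exp (2 * θ) + 2 * t * exp θ + t ^ 2 = (exp θ + t) ^ 2 := by
  rw [two_mul θ, exp_add]
  ring

end Complex

/-- For an integer `k ≥ 2` and a real `t > 0`, the number
`(e^{iπ/k} + 2t e^{iπ/(2k)} + t²)^k` has strictly positive imaginary part;
consequently `1 + (e^{iπ/k} + 2t e^{iπ/(2k)} + t²)^k` avoids the cut `(−∞, 0]`,
i.e. it lies in the slit plane. -/
theorem one_dim_case_avoids_cut
    (k : ℕ) (hk : 2 ≤ k) (t : ℝ) (ht : 0 < t) :
    0 < (((Complex.exp (Real.pi * I / k) + 2 * t * Complex.exp (Real.pi * I / (2 * k))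
          + (t : ℂ) ^ 2)) ^ k).im ∧
      (1 + ((Complex.exp (Real.pi * I / k) + 2 * t * Complex.exp (Real.pi * I / (2 * k))
          + (t : ℂ) ^ 2)) ^ k) ∈ Complex.slitPlane := by
  have hk2 : (2 : ℝ) ≤ k := by exact_mod_cast hk
  set θ : ℝ := π / (2 * k) with hθ
  have hsq : exp (π * I / k) + 2 * t * exp (π * I / (2 * k)) + (t : ℂ) ^ 2
      = (exp (θ * I) + t) ^ 2 := by
    rw [← exp_two_mul_add_sq]
    congr 3 <;> (rw [hθ]; push_cast; field_simp)
  obtain ⟨harg_pos, harg_lt⟩ := arg_exp_mul_I_add_ofReal_mem_Ioo (θ := θ) (by positivity)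
    (div_lt_self pi_pos (by linarith)) ht
  have him : 0 < ((exp (θ * I) + t) ^ (2 * k)).im := by
    apply im_pow_pos_of_arg (by positivity)
    calc ((2 * k : ℕ) : ℝ) * arg (exp (θ * I) + t) < 2 * k * θ := by push_cast; gcongr
      _ = π := by rw [hθ]; field_simp
  rw [hsq, ← pow_mul]
  exact ⟨him, one_add_mem_slitPlane_of_im_pos him⟩
end

section
/- Let k ≥ 1 be an integer, let β > 1 be a real number with 2β ∉ ℤ, let c ≠ 0 be real, and let δ ∈ (0, 1). Then there exist no open interval I containing 1 and real analytic functions a, b : I → ℝ such that c(1 − y^{2k})^{2β} = a(y)(1 − y^{2k})^β + b(y) for all y ∈ (1 − δ, 1). -/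
/-!
Write `u y = 1 - y ^ (2k) ~ 2k (1 - y)` as `y → 1⁻`, so `u ^ β` and `c u ^ (2β)` have leading
exponents `β` and `2β`, whereas a function analytic at `1` and not locally zero has a natural
number as leading exponent. If `a` vanishes near `1`, then `b = c u ^ (2β)` has exponent `2β`;
otherwise `a u ^ β` has exponent `n + β ≠ 2β` for some `n ∈ ℕ`, and `b = c u ^ (2β) - a u ^ β` has
exponent `min (n + β) (2β)`. Analyticity of `b` makes this exponent a natural number, so `2β ∈ ℤ`.
-/

open Filter Topology

lemma tendsto_const_sub_nhdsLT (x₀ : ℝ) :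
    Tendsto (fun y => x₀ - y) (𝓝[<] x₀) (𝓝[>] 0) := by
  refine tendsto_nhdsWithin_of_tendsto_nhds_of_eventually_within _ ?_ ?_
  · simpa using ((continuous_sub_left x₀).tendsto x₀).mono_left nhdsWithin_le_nhds
  · filter_upwards [self_mem_nhdsWithin] with y hy
    exact sub_pos.mpr (Set.mem_Iio.mp hy)

lemma eventually_const_sub_pos_nhdsLT (x₀ : ℝ) : ∀ᶠ y in 𝓝[<] x₀, 0 < x₀ - y :=
  (tendsto_const_sub_nhdsLT x₀).eventually self_mem_nhdsWithin

lemma tendsto_const_sub_rpow_nhdsLT {x₀ e : ℝ} (he : 0 < e) :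
    Tendsto (fun y => (x₀ - y) ^ e) (𝓝[<] x₀) (𝓝 0) := by
  have h := (Real.continuousAt_rpow_const 0 e (Or.inr he.le)).tendsto
  rw [Real.zero_rpow he.ne'] at h
  exact h.comp ((tendsto_const_sub_nhdsLT x₀).mono_right nhdsWithin_le_nhds)

lemma eq_zero_of_tendsto_const_sub_rpow_nhdsLT {x₀ e L : ℝ} (hL : L ≠ 0)
    (h : Tendsto (fun y => (x₀ - y) ^ e) (𝓝[<] x₀) (𝓝 L)) : e = 0 := by
  rcases lt_trichotomy e 0 with he | he | he
  · exact absurd h (not_tendsto_nhds_of_tendsto_atTop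
      ((tendsto_rpow_neg_nhdsGT_zero he).comp (tendsto_const_sub_nhdsLT x₀)) L)
  · exact he
  · exact absurd (tendsto_nhds_unique h (tendsto_const_sub_rpow_nhdsLT he)) hL

/-- For `L ≠ 0`: `f y ~ L * (x₀ - y) ^ α` as `y → x₀⁻`. -/
def HasLeftLeadingTerm (f : ℝ → ℝ) (x₀ L α : ℝ) : Prop :=
  Tendsto (fun y => f y / (x₀ - y) ^ α) (𝓝[<] x₀) (𝓝 L)

namespace HasLeftLeadingTerm

variable {f g : ℝ → ℝ} {x₀ L M α γ : ℝ}

lemma congr (hf : HasLeftLeadingTerm f x₀ L α) (hfg : f =ᶠ[𝓝[<] x₀] g) :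
    HasLeftLeadingTerm g x₀ L α :=
  hf.congr' (hfg.mono fun y hy => by rw [hy])

lemma eventually_ne_zero (hf : HasLeftLeadingTerm f x₀ L α) (hL : L ≠ 0) :
    ∀ᶠ y in 𝓝[<] x₀, f y ≠ 0 :=
  (hf.eventually_ne hL).mono fun y hy hfy => hy (by rw [hfy, zero_div])

lemma exponent_unique (hf : HasLeftLeadingTerm f x₀ L α) (hf' : HasLeftLeadingTerm f x₀ M γ)
    (hL : L ≠ 0) (hM : M ≠ 0) : α = γ := by
  have hratio : Tendsto (fun y => (x₀ - y) ^ (γ - α)) (𝓝[<] x₀) (𝓝 (L / M)) := by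
    refine (Tendsto.div hf hf' hM).congr' ?_
    filter_upwards [hf.eventually_ne_zero hL, eventually_const_sub_pos_nhdsLT x₀]
      with y hfy ht
    rw [Pi.div_apply, Real.rpow_sub ht]
    field_simp
  linarith [eq_zero_of_tendsto_const_sub_rpow_nhdsLT (div_ne_zero hL hM) hratio]

lemma const_mul (hf : HasLeftLeadingTerm f x₀ L α) (c : ℝ) :
    HasLeftLeadingTerm (fun y => c * f y) x₀ (c * L) α := by
  simpa only [HasLeftLeadingTerm, mul_div_assoc] using Tendsto.const_mul c hf

lemma neg (hf : HasLeftLeadingTerm f x₀ L α) :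
    HasLeftLeadingTerm (fun y => -f y) x₀ (-L) α := by
  simpa only [HasLeftLeadingTerm, neg_div] using Tendsto.neg hf

lemma mul (hf : HasLeftLeadingTerm f x₀ L α) (hg : HasLeftLeadingTerm g x₀ M γ) :
    HasLeftLeadingTerm (fun y => f y * g y) x₀ (L * M) (α + γ) := by
  refine (Tendsto.mul hf hg).congr' ?_
  filter_upwards [eventually_const_sub_pos_nhdsLT x₀] with y ht
  rw [Real.rpow_add ht, mul_div_mul_comm]

lemma add_of_lt (hf : HasLeftLeadingTerm f x₀ L α) (hg : HasLeftLeadingTerm g x₀ M γ)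
    (hαγ : α < γ) : HasLeftLeadingTerm (fun y => f y + g y) x₀ L α := by
  have h := Tendsto.add hf (Tendsto.mul hg (tendsto_const_sub_rpow_nhdsLT (sub_pos.mpr hαγ)))
  rw [mul_zero, add_zero] at h
  refine h.congr' ?_
  filter_upwards [eventually_const_sub_pos_nhdsLT x₀] with y ht
  rw [Real.rpow_sub ht]
  field_simp

lemma add_of_gt (hf : HasLeftLeadingTerm f x₀ L α) (hg : HasLeftLeadingTerm g x₀ M γ)
    (hγα : γ < α) : HasLeftLeadingTerm (fun y => f y + g y) x₀ M γ := by
  simpa only [add_comm (f _)] using hg.add_of_lt hf hγα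

lemma rpow (hf : HasLeftLeadingTerm f x₀ L α) (hL : 0 < L) (p : ℝ) :
    HasLeftLeadingTerm (fun y => f y ^ p) x₀ (L ^ p) (α * p) := by
  refine (hf.rpow_const (Or.inl hL.ne')).congr' ?_
  filter_upwards [hf.eventually (eventually_gt_nhds hL), eventually_const_sub_pos_nhdsLT x₀]
    with y hq ht
  have hfy : 0 ≤ f y := (div_pos_iff_of_pos_right (Real.rpow_pos_of_pos ht α)).mp hq |>.le
  rw [Real.div_rpow hfy (Real.rpow_nonneg ht.le α), Real.rpow_mul ht.le]

end HasLeftLeadingTerm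

lemma HasDerivAt.hasLeftLeadingTerm {f : ℝ → ℝ} {f' x₀ : ℝ} (hf : HasDerivAt f f' x₀)
    (hf0 : f x₀ = 0) : HasLeftLeadingTerm f x₀ (-f') 1 := by
  refine ((hasDerivAt_iff_tendsto_slope.mp hf).mono_left
    (nhdsWithin_mono _ fun y hy => ne_of_lt hy)).neg.congr' ?_
  filter_upwards [eventually_const_sub_pos_nhdsLT x₀] with y ht
  rw [slope_def_field, hf0, Real.rpow_one, sub_zero, ← neg_sub x₀ y, div_neg, neg_neg]

lemma AnalyticAt.exists_hasLeftLeadingTerm_natCast {f : ℝ → ℝ} {x₀ : ℝ}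
    (hf : AnalyticAt ℝ f x₀) (hf0 : ¬ ∀ᶠ y in 𝓝 x₀, f y = 0) :
    ∃ n : ℕ, ∃ L ≠ 0, HasLeftLeadingTerm f x₀ L n := by
  obtain ⟨n, g, hg, hgx₀, hfg⟩ := hf.exists_eventuallyEq_pow_smul_nonzero_iff.mpr hf0
  refine ⟨n, (-1) ^ n * g x₀, mul_ne_zero (pow_ne_zero n (by norm_num)) hgx₀, ?_⟩
  refine ((tendsto_const_nhds.mul hg.continuousAt.tendsto).mono_left nhdsWithin_le_nhds).congr' ?_
  filter_upwards [nhdsWithin_le_nhds hfg, eventually_const_sub_pos_nhdsLT x₀] with y hy ht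
  rw [hy, smul_eq_mul, Real.rpow_natCast, ← neg_sub, neg_pow (x₀ - y)]
  field_simp

lemma AnalyticAt.exists_natCast_eq_of_hasLeftLeadingTerm {f : ℝ → ℝ} {x₀ L α : ℝ}
    (hf : AnalyticAt ℝ f x₀) (hfL : HasLeftLeadingTerm f x₀ L α) (hL : L ≠ 0) :
    ∃ n : ℕ, α = n := by
  have hf0 : ¬ ∀ᶠ y in 𝓝 x₀, f y = 0 := fun h =>
    (hfL.eventually_ne_zero hL).and (nhdsWithin_le_nhds h) |>.exists.elim fun _ hy => hy.1 hy.2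
  obtain ⟨n, M, hM, hfM⟩ := hf.exists_hasLeftLeadingTerm_natCast hf0
  exact ⟨n, hfL.exponent_unique hfM hL hM⟩

theorem gmq_no_analytic_identity_irrational_case_general
    (k : ℕ) (hk : 1 ≤ k) (β : ℝ) (hβ2 : ∀ m : ℤ, 2 * β ≠ m)
    (c : ℝ) (hc : c ≠ 0) (δ : ℝ) (hδ : δ ∈ Set.Ioo (0 : ℝ) 1) :
    ¬ ∃ (l r : ℝ) (a b : ℝ → ℝ), l < 1 ∧ 1 < r ∧
        (∀ y ∈ Set.Ioo l r, AnalyticAt ℝ a y) ∧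
        (∀ y ∈ Set.Ioo l r, AnalyticAt ℝ b y) ∧
        ∀ y ∈ Set.Ioo (1 - δ) 1,
          c * (1 - y ^ (2 * k)) ^ (2 * β) =
            a y * (1 - y ^ (2 * k)) ^ β + b y := by
  rintro ⟨l, r, a, b, hl, hr, ha, hb, hid⟩
  set u : ℝ → ℝ := fun y => 1 - y ^ (2 * k)
  have hk2 : (0 : ℝ) < 2 * k := by positivity
  have hu : HasLeftLeadingTerm u 1 (2 * k) 1 := by
    simpa using ((hasDerivAt_pow (2 * k) (1 : ℝ)).const_sub 1).hasLeftLeadingTerm (by simp)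
  have hupow (p : ℝ) : HasLeftLeadingTerm (fun y => u y ^ p) 1 ((2 * k) ^ p) p := by
    simpa using hu.rpow hk2 p
  have hbeq : b =ᶠ[𝓝[<] 1] fun y => c * u y ^ (2 * β) + -(a y * u y ^ β) := by
    filter_upwards [Ioo_mem_nhdsLT (sub_lt_self 1 hδ.1)] with y hy
    linarith [hid y hy]
  have hbnat {L α : ℝ} (hbL : HasLeftLeadingTerm b 1 L α) (hL : L ≠ 0) : ∃ n : ℕ, α = n :=
    (hb 1 ⟨hl, hr⟩).exists_natCast_eq_of_hasLeftLeadingTerm hbL hL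
  have hcu := (hupow (2 * β)).const_mul c
  have hcu0 : c * (2 * k) ^ (2 * β) ≠ 0 := mul_ne_zero hc (by positivity)
  by_cases ha0 : ∀ᶠ y in 𝓝 1, a y = 0
  · have hbL : HasLeftLeadingTerm b 1 (c * (2 * k) ^ (2 * β)) (2 * β) := by
      refine hcu.congr ?_
      filter_upwards [hbeq, nhdsWithin_le_nhds ha0] with y hby hay
      simp [hby, hay]
    obtain ⟨m, hm⟩ := hbnat hbL hcu0
    exact hβ2 m (by exact_mod_cast hm)
  obtain ⟨n, A, hA, haA⟩ := (ha 1 ⟨hl, hr⟩).exists_hasLeftLeadingTerm_natCast ha0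
  have hau := (haA.mul (hupow β)).neg
  rcases lt_trichotomy (n : ℝ) β with hnβ | hnβ | hnβ
  · obtain ⟨m, hm⟩ := hbnat ((hcu.add_of_gt hau (by linarith)).congr hbeq.symm)
      (neg_ne_zero.mpr (mul_ne_zero hA (by positivity)))
    exact hβ2 (2 * m - 2 * n) (by push_cast; linarith)
  · exact hβ2 (2 * n) (by push_cast; linarith)
  · obtain ⟨m, hm⟩ := hbnat ((hcu.add_of_lt hau (by linarith)).congr hbeq.symm) hcu0
    exact hβ2 m (by exact_mod_cast hm)

/-- **Order-matching contradiction, case `2β ∉ ℤ`.** For an integer `k ≥ 1`, a real `β > 1`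
with `2β ∉ ℤ`, a real `c ≠ 0` and `δ ∈ (0,1)`, there are no functions `a, b` real analytic
on an open interval around `1` such that
`c(1 − y^{2k})^{2β} = a(y)(1 − y^{2k})^β + b(y)` for all `y ∈ (1 − δ, 1)`. -/
theorem gmq_no_analytic_identity_irrational_case
    (k : ℕ) (hk : 1 ≤ k) (β : ℝ) (hβ : 1 < β) (hβ2 : ∀ m : ℤ, 2 * β ≠ m)
    (c : ℝ) (hc : c ≠ 0) (δ : ℝ) (hδ : δ ∈ Set.Ioo (0 : ℝ) 1) :
    ¬ ∃ (l r : ℝ) (a b : ℝ → ℝ), l < 1 ∧ 1 < r ∧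
        (∀ y ∈ Set.Ioo l r, AnalyticAt ℝ a y) ∧
        (∀ y ∈ Set.Ioo l r, AnalyticAt ℝ b y) ∧
        ∀ y ∈ Set.Ioo (1 - δ) 1,
          c * (1 - y ^ (2 * k)) ^ (2 * β) =
            a y * (1 - y ^ (2 * k)) ^ β + b y :=
  gmq_no_analytic_identity_irrational_case_general k hk β hβ2 c hc δ hδ
end
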